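/- Let M = G/H be a nilmanifold of complex dimension n obtained from a complex nilpotent Lie group G with Lie algebra g (complexification g_ℂ) and a discrete subgroup H, endowed with a left-invariant complex structure and a left-invariant holomorphic Poisson bivector field π. If for every p ≥ 0 the natural inclusion of complexes (∧^{p,•} g_ℂ*, ∂̄) ↪ (Γ(M, A_M^{p,•}), ∂̄) is a quasi-isomorphism, then the total cohomology of the finite-dimensional double complex (∧^{•,•} g_ℂ*, ∂_π, ∂̄) is isomorphic to the holomorphic Koszul–Brylinski homology H_•(M, π). -/

import Mathlib

/-!
# Invariant forms compute the Koszul–Brylinski homology of nilmanifolds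

Statement 12 of Chen–Chen–Yang–Yang, *Holomorphic Koszul–Brylinski homologies of
Poisson blow-ups* (Lemma 6.2).

For a nilmanifold `M = G/H` of complex dimension `n` with a left-invariant complex
structure and a left-invariant holomorphic Poisson bivector field `π`, we model the
finite-dimensional double complex `(∧^{•,•} g_ℂ^*, ∂_π, ∂̄)` of left-invariant forms
and the double complex `(Γ(M, A_M^{•,•}), ∂_π, ∂̄)` of global smooth forms — whose
total cohomology computes the holomorphic Koszul–Brylinski homology `H_•(M, π)` — as
abstract double complexes of `ℂ`-vector spaces, together with the natural inclusion.
The theorem: if the inclusion `(∧^{p,•} g_ℂ^*, ∂̄) ↪ (Γ(M, A_M^{p,•}), ∂̄)` is a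
quasi-isomorphism for every `p`, then the total cohomology of the invariant double
complex is isomorphic to `H_•(M, π)`.
-/

/-- A double complex of `ℂ`-vector spaces `(A^{p,q}, d_h, d_v)` with horizontal
differential of bidegree `(-1, 0)` (the Koszul–Brylinski operator `∂_π`) and vertical
differential of bidegree `(0, 1)` (the Dolbeault operator `∂̄`). -/
structure PoissonDoubleComplex where
  A : ℤ → ℤ → Type
  acg : ∀ p q, AddCommGroup (A p q)
  mod : ∀ p q, Module ℂ (A p q)
  dh : ∀ p q, A p q →ₗ[ℂ] A (p - 1) q
  dv : ∀ p q, A p q →ₗ[ℂ] A p (q + 1)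
  dh_dh : ∀ p q (x : A p q), dh (p - 1) q (dh p q x) = 0
  dv_dv : ∀ p q (x : A p q), dv p (q + 1) (dv p q x) = 0
  dh_dv : ∀ p q (x : A p q), dv (p - 1) q (dh p q x) + dh p (q + 1) (dv p q x) = 0

attribute [instance] PoissonDoubleComplex.acg PoissonDoubleComplex.mod

namespace PoissonDoubleComplex

variable (K : PoissonDoubleComplex)

/-- transport along an equality of bidegrees -/
def castA {p p' q q' : ℤ} (hp : p = p') (hq : q = q') : K.A p q →ₗ[ℂ] K.A p' q' := by
  subst hp; subst hq; exact LinearMap.id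

/-- The degree-`k` component of the total complex, with respect to the
Koszul–Brylinski grading `k = n - p + q` (`n` = complex dimension). -/
abbrev Tot (n : ℕ) (k : ℤ) : Type := Π₀ q : ℤ, K.A ((n : ℤ) - k + q) q

/-- the total differential `∂_π + ∂̄` -/
noncomputable def totD (n : ℕ) (k : ℤ) : K.Tot n k →ₗ[ℂ] K.Tot n (k + 1) :=
  DFinsupp.lsum ℂ fun q =>
    (DFinsupp.lsingle (M := fun q' : ℤ => K.A ((n : ℤ) - (k + 1) + q') q') q).comp
      ((K.castA (show (n : ℤ) - k + q - 1 = (n : ℤ) - (k + 1) + q by ring) rfl).comp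
        (K.dh ((n : ℤ) - k + q) q)) +
    (DFinsupp.lsingle (M := fun q' : ℤ => K.A ((n : ℤ) - (k + 1) + q') q') (q + 1)).comp
      ((K.castA (show (n : ℤ) - k + q = (n : ℤ) - (k + 1) + (q + 1) by ring) rfl).comp
        (K.dv ((n : ℤ) - k + q) q))

/-- transport along an equality of total degrees -/
def castTot (n : ℕ) {k k' : ℤ} (h : k = k') : K.Tot n k →ₗ[ℂ] K.Tot n k' := by
  subst h; exact LinearMap.id

/-- the cycles of total degree `k` -/
noncomputable def cycles (n : ℕ) (k : ℤ) : Submodule ℂ (K.Tot n k) :=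
  LinearMap.ker (K.totD n k)

/-- the boundaries of total degree `k` -/
noncomputable def boundaries (n : ℕ) (k : ℤ) : Submodule ℂ (K.Tot n k) :=
  LinearMap.range ((K.castTot n (show k - 1 + 1 = k by ring)).comp (K.totD n (k - 1)))

/-- the `k`-th cohomology of the total complex -/
noncomputable abbrev totCoh (n : ℕ) (k : ℤ) : Type :=
  K.cycles n k ⧸ Submodule.comap (K.cycles n k).subtype (K.boundaries n k)

end PoissonDoubleComplex

/-!
The inclusion `ι` induces a map of total complexes, which is a quasi-isomorphism as soon as
its mapping cone is acyclic. Subtracting a suitable cone boundary from a cone cycle `(z, u)`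
lowers by one the column degrees `q` in which it is supported: the top
component of `z` is `∂̄`-closed with `∂̄`-exact image, hence `∂̄`-exact among invariant forms;
once it is removed, the top component of `u` is `∂̄`-closed, hence `∂̄`-cohomologous to an
invariant form. Since the columns vanish in negative degrees, this descent ends at `0`.
-/

theorem DFinsupp.exists_forall_lt_apply_eq_zero {ι : Type*} [SemilatticeSup ι] [Nonempty ι]
    {β : ι → Type*} [∀ i, Zero (β i)] (u : Π₀ i, β i) : ∃ b, ∀ i, b < i → u i = 0 := by
  classical
  obtain ⟨b, hb⟩ := u.support.bddAbove
  exact ⟨b, fun i hi => by_contra fun h => hi.not_ge (hb (DFinsupp.mem_support_iff.2 h))⟩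

namespace PoissonDoubleComplex

variable (K : PoissonDoubleComplex)

@[simp] theorem castA_rfl {p q : ℤ} (hp : p = p) (hq : q = q) (x : K.A p q) :
    K.castA hp hq x = x := rfl

@[simp] theorem castA_castA {p p' p'' q q' q'' : ℤ} (hp : p = p') (hq : q = q')
    (hp' : p' = p'') (hq' : q' = q'') (x : K.A p q) :
    K.castA hp' hq' (K.castA hp hq x) = K.castA (hp.trans hp') (hq.trans hq') x := by
  subst hp hq hp' hq'; rfl

@[simp] theorem castA_eq_zero_iff {p p' q q' : ℤ} (hp : p = p') (hq : q = q') (x : K.A p q) :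
    K.castA hp hq x = 0 ↔ x = 0 := by
  subst hp hq; rfl

@[simp] theorem dh_castA {p p' q q' : ℤ} (hp : p = p') (hq : q = q') (x : K.A p q) :
    K.dh p' q' (K.castA hp hq x) = K.castA (by rw [hp]) hq (K.dh p q x) := by
  subst hp hq; rfl

@[simp] theorem dv_castA {p p' q q' : ℤ} (hp : p = p') (hq : q = q') (x : K.A p q) :
    K.dv p' q' (K.castA hp hq x) = K.castA hp (by rw [hq]) (K.dv p q x) := by
  subst hp hq; rfl

variable (n : ℕ)

-- `hd` and `vd` are `dh` and `dv` reindexed to the grading of `Tot`: the two components of `totD`.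
def hd (k q : ℤ) : K.A (n - k + q) q →ₗ[ℂ] K.A (n - (k + 1) + q) q :=
  (K.castA (by ring) rfl).comp (K.dh _ q)

def vd (k q : ℤ) : K.A (n - k + q) q →ₗ[ℂ] K.A (n - (k + 1) + (q + 1)) (q + 1) :=
  (K.castA (by ring) rfl).comp (K.dv _ q)

theorem hd_hd (k q : ℤ) (x : K.A (n - k + q) q) : K.hd n (k + 1) q (K.hd n k q x) = 0 := by
  simp [hd, K.dh_dh]

theorem vd_vd (k q : ℤ) (x : K.A (n - k + q) q) :
    K.vd n (k + 1) (q + 1) (K.vd n k q x) = 0 := by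
  simp [vd, K.dv_dv]

theorem vd_hd_add_hd_vd (k q : ℤ) (x : K.A (n - k + q) q) :
    K.vd n (k + 1) q (K.hd n k q x) + K.hd n (k + 1) (q + 1) (K.vd n k q x) = 0 := by
  simp only [hd, vd, LinearMap.comp_apply, dh_castA, dv_castA, castA_castA]
  rw [← map_add, K.dh_dv, map_zero]

theorem totD_single (k q : ℤ) (x : K.A (n - k + q) q) :
    K.totD n k (DFinsupp.single q x) =
      (DFinsupp.single q (K.hd n k q x) : K.Tot n (k + 1)) +
        (DFinsupp.single (q + 1) (K.vd n k q x) : K.Tot n (k + 1)) :=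
  DFinsupp.lsum_single _ _ _ _

theorem totD_single_apply_succ (k j q : ℤ) (x : K.A (n - k + j) j) :
    K.totD n k (DFinsupp.single j x) (q + 1) =
      K.hd n k (q + 1) ((DFinsupp.single j x : K.Tot n k) (q + 1)) +
        K.vd n k q ((DFinsupp.single j x : K.Tot n k) q) := by
  rw [totD_single, DFinsupp.add_apply]
  rcases eq_or_ne j q with rfl | hjq
  · rw [DFinsupp.single_eq_of_ne (show j + 1 ≠ j by omega), DFinsupp.single_eq_same,
      DFinsupp.single_eq_of_ne (show j + 1 ≠ j by omega), DFinsupp.single_eq_same]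
    simp
  · rw [DFinsupp.single_eq_of_ne (show q + 1 ≠ j + 1 by omega),
      DFinsupp.single_eq_of_ne (β := fun i => K.A (n - k + i) i) hjq.symm, map_zero, add_zero,
      add_zero]
    rcases eq_or_ne j (q + 1) with rfl | hjq'
    · simp
    · rw [DFinsupp.single_eq_of_ne hjq'.symm, DFinsupp.single_eq_of_ne hjq'.symm, map_zero]

theorem totD_apply_succ (k : ℤ) (u : K.Tot n k) (q : ℤ) :
    K.totD n k u (q + 1) = K.hd n k (q + 1) (u (q + 1)) + K.vd n k q (u q) := by
  induction u using DFinsupp.induction with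
  | h0 => simp
  | ha j x u _ _ ih =>
    simp only [map_add, DFinsupp.add_apply, ih, totD_single_apply_succ]
    abel

theorem totD_single_apply_succ_self (k j : ℤ) (x : K.A (n - k + j) j) :
    K.totD n k (DFinsupp.single j x) (j + 1) = K.vd n k j x := by
  rw [totD_apply_succ, DFinsupp.single_eq_of_ne (show j + 1 ≠ j by omega),
    DFinsupp.single_eq_same, map_zero, zero_add]

theorem totD_single_apply_of_lt (k j q : ℤ) (x : K.A (n - k + j) j) (hq : j + 1 < q) :
    K.totD n k (DFinsupp.single j x) q = 0 := by
  obtain ⟨q, rfl⟩ : ∃ q', q = q' + 1 := ⟨q - 1, by ring⟩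
  rw [totD_apply_succ, DFinsupp.single_eq_of_ne (show q + 1 ≠ j by omega),
    DFinsupp.single_eq_of_ne (show q ≠ j by omega), map_zero, map_zero, add_zero]

theorem totD_totD (k : ℤ) (u : K.Tot n k) : K.totD n (k + 1) (K.totD n k u) = 0 := by
  induction u using DFinsupp.induction with
  | h0 => simp
  | ha q x u _ _ ih =>
    rw [map_add, map_add, ih, add_zero, totD_single, map_add, totD_single, totD_single,
      hd_hd, vd_vd, DFinsupp.single_zero, DFinsupp.single_zero, zero_add, add_zero,
      ← DFinsupp.single_add, vd_hd_add_hd_vd, DFinsupp.single_zero]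

theorem tot_eq_zero_of_apply_nonneg_eq_zero (hK : ∀ p q, q < 0 → Subsingleton (K.A p q))
    {k : ℤ} (u : K.Tot n k) (hu : ∀ q, 0 ≤ q → u q = 0) : u = 0 := by
  ext q
  by_cases hq : q < 0
  · have := hK (n - k + q) q hq
    exact Subsingleton.elim _ _
  · exact hu q (by omega)

theorem mem_boundaries_succ_iff (k : ℤ) (x : K.Tot n (k + 1)) :
    x ∈ K.boundaries n (k + 1) ↔ ∃ w, K.totD n k w = x := by
  have key : ∀ {j k' : ℤ} (h : j + 1 = k') (x : K.Tot n k'),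
      x ∈ K.boundaries n k' ↔ ∃ w, K.castTot n h (K.totD n j w) = x := by
    intro j k' h x
    obtain rfl : j = k' - 1 := by omega
    exact LinearMap.mem_range
  exact key rfl x

structure Hom (K L : PoissonDoubleComplex) where
  app : ∀ p q, K.A p q →ₗ[ℂ] L.A p q
  comm_dh : ∀ p q (x : K.A p q), L.dh p q (app p q x) = app (p - 1) q (K.dh p q x)
  comm_dv : ∀ p q (x : K.A p q), L.dv p q (app p q x) = app p (q + 1) (K.dv p q x)

namespace Hom

variable {K} {L : PoissonDoubleComplex} (f : Hom K L)

@[simp] theorem app_castA {p p' q q' : ℤ} (hp : p = p') (hq : q = q') (x : K.A p q) :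
    f.app p' q' (K.castA hp hq x) = L.castA hp hq (f.app p q x) := by
  subst hp hq; rfl

@[simp] theorem hd_app (k q : ℤ) (x : K.A (n - k + q) q) :
    L.hd n k q (f.app _ q x) = f.app _ q (K.hd n k q x) := by
  simp [hd, f.comm_dh]

@[simp] theorem vd_app (k q : ℤ) (x : K.A (n - k + q) q) :
    L.vd n k q (f.app _ q x) = f.app _ (q + 1) (K.vd n k q x) := by
  simp [vd, f.comm_dv]

noncomputable def totMap (k : ℤ) : K.Tot n k →ₗ[ℂ] L.Tot n k :=
  DFinsupp.mapRange.linearMap fun q => f.app (n - k + q) q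

@[simp] theorem totMap_apply (k : ℤ) (u : K.Tot n k) (q : ℤ) :
    f.totMap n k u q = f.app _ q (u q) :=
  rfl

@[simp] theorem totMap_single (k q : ℤ) (x : K.A (n - k + q) q) :
    f.totMap n k (DFinsupp.single q x) = (DFinsupp.single q (f.app _ q x) : L.Tot n k) :=
  DFinsupp.mapRange_single (hf := fun _ => map_zero _)

theorem totD_totMap (k : ℤ) (u : K.Tot n k) :
    L.totD n k (f.totMap n k u) = f.totMap n (k + 1) (K.totD n k u) := by
  induction u using DFinsupp.induction with
  | h0 => simp
  | ha q x u _ _ ih => simp [ih, totD_single]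

theorem totMap_mem_cycles {k : ℤ} {u : K.Tot n k} (hu : u ∈ K.cycles n k) :
    f.totMap n k u ∈ L.cycles n k := by
  rw [cycles, LinearMap.mem_ker] at hu ⊢
  rw [totD_totMap, hu, map_zero]

theorem totMap_mem_boundaries {k : ℤ} {u : K.Tot n k} (hu : u ∈ K.boundaries n k) :
    f.totMap n k u ∈ L.boundaries n k := by
  obtain ⟨j, rfl⟩ : ∃ j, k = j + 1 := ⟨k - 1, by ring⟩
  obtain ⟨w, rfl⟩ := (K.mem_boundaries_succ_iff n j u).1 hu
  exact (L.mem_boundaries_succ_iff n j _).2 ⟨f.totMap n j w, f.totD_totMap n j w⟩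

noncomputable def totCohMap (k : ℤ) : K.totCoh n k →ₗ[ℂ] L.totCoh n k :=
  Submodule.mapQ _ _ ((f.totMap n k).restrict fun _ => f.totMap_mem_cycles n)
    fun _ => f.totMap_mem_boundaries n

theorem totCohMap_mk (k : ℤ) (u : K.cycles n k) :
    f.totCohMap n k (Submodule.Quotient.mk u) =
      Submodule.Quotient.mk ⟨f.totMap n k u, f.totMap_mem_cycles n u.2⟩ :=
  rfl

structure IsColumnQuasiIso : Prop where
  cohomology_injective : ∀ p q (x : K.A p (q + 1)), K.dv p (q + 1) x = 0 →
    (∃ y, L.dv p q y = f.app p (q + 1) x) → ∃ c, K.dv p q c = x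
  cohomology_surjective : ∀ p q (u : L.A p (q + 1)), L.dv p (q + 1) u = 0 →
    ∃ x y, K.dv p (q + 1) x = 0 ∧ u = f.app p (q + 1) x + L.dv p q y

noncomputable def coneD (j : ℤ) :
    K.Tot n (j + 1) × L.Tot n j →ₗ[ℂ] K.Tot n (j + 1 + 1) × L.Tot n (j + 1) :=
  ((K.totD n (j + 1)).comp (LinearMap.fst ℂ _ _)).prod
    ((f.totMap n (j + 1)).comp (LinearMap.fst ℂ _ _) - (L.totD n j).comp (LinearMap.snd ℂ _ _))

@[simp] theorem coneD_apply (j : ℤ) (s : K.Tot n (j + 1)) (t : L.Tot n j) :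
    f.coneD n j (s, t) = (K.totD n (j + 1) s, f.totMap n (j + 1) s - L.totD n j t) :=
  rfl

theorem coneD_coneD (j : ℤ) (x : K.Tot n (j + 1) × L.Tot n j) :
    f.coneD n (j + 1) (f.coneD n j x) = 0 := by
  obtain ⟨s, t⟩ := x
  simp [totD_totD, totD_totMap]

variable {f} {n}

theorem IsColumnQuasiIso.exists_vd_eq (hf : f.IsColumnQuasiIso) {k q : ℤ}
    (x : K.A (n - (k + 1) + (q + 1)) (q + 1)) (hx : K.vd n (k + 1) (q + 1) x = 0)
    (y : L.A (n - k + q) q) (hy : L.vd n k q y = f.app _ _ x) : ∃ c, K.vd n k q c = x := by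
  have hp : (n : ℤ) - k + q = n - (k + 1) + (q + 1) := by ring
  obtain ⟨c, hc⟩ := hf.cohomology_injective _ q x (by simpa [vd] using hx)
    ⟨L.castA hp rfl y, by simpa [vd] using hy⟩
  exact ⟨K.castA hp.symm rfl c, by simp [vd, hc]⟩

theorem IsColumnQuasiIso.exists_app_add_vd (hf : f.IsColumnQuasiIso) {k q : ℤ}
    (u : L.A (n - (k + 1) + (q + 1)) (q + 1)) (hu : L.vd n (k + 1) (q + 1) u = 0) :
    ∃ x y, K.vd n (k + 1) (q + 1) x = 0 ∧ u = f.app _ _ x + L.vd n k q y := by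
  have hp : (n : ℤ) - k + q = n - (k + 1) + (q + 1) := by ring
  obtain ⟨x, y, hx, rfl⟩ := hf.cohomology_surjective _ q u (by simpa [vd] using hu)
  exact ⟨x, L.castA hp.symm rfl y, by simp [vd, hx], by simp [vd]⟩
theorem IsColumnQuasiIso.exists_sub_coneD_fst_vanishes (hf : f.IsColumnQuasiIso) {j b : ℤ}
    (x : K.Tot n (j + 1 + 1) × L.Tot n (j + 1)) (hx : f.coneD n (j + 1) x = 0)
    (h₁ : ∀ q, b + 1 + 1 < q → x.1 q = 0) (h₂ : ∀ q, b + 1 < q → x.2 q = 0) :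
    ∃ y, (∀ q, b + 1 < q → (x - f.coneD n j y).1 q = 0) ∧
      (∀ q, b + 1 < q → (x - f.coneD n j y).2 q = 0) := by
  obtain ⟨z, u⟩ := x
  have hz : K.totD n (j + 1 + 1) z = 0 := congrArg Prod.fst hx
  have hzu : f.totMap n (j + 1 + 1) z = L.totD n (j + 1) u :=
    sub_eq_zero.1 (congrArg Prod.snd hx)
  have hvd : K.vd n (j + 1 + 1) (b + 1 + 1) (z (b + 1 + 1)) = 0 := by
    simpa [totD_apply_succ, h₁ (b + 1 + 1 + 1) (by omega)] using
      congrArg (· (b + 1 + 1 + 1)) hz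
  have happ : L.vd n (j + 1) (b + 1) (u (b + 1)) = f.app _ _ (z (b + 1 + 1)) := by
    simpa [totD_apply_succ, h₂ (b + 1 + 1) (by omega)] using
      (congrArg (· (b + 1 + 1)) hzu).symm
  obtain ⟨c, hc⟩ := hf.exists_vd_eq _ hvd _ happ
  refine ⟨(DFinsupp.single (b + 1) c, 0), fun q hq => ?_, fun q hq => ?_⟩
  · rcases (show q = b + 1 + 1 ∨ b + 1 + 1 < q by omega) with rfl | hq
    · simp [totD_single_apply_succ_self, hc]
    · simp [totD_single_apply_of_lt _ _ _ _ _ _ hq, h₁ q hq]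
  · simp [h₂ q hq, DFinsupp.single_eq_of_ne (show q ≠ b + 1 by omega)]

theorem IsColumnQuasiIso.exists_sub_coneD_snd_vanishes (hf : f.IsColumnQuasiIso) {j b : ℤ}
    (x : K.Tot n (j + 1 + 1) × L.Tot n (j + 1)) (hx : f.coneD n (j + 1) x = 0)
    (h₁ : ∀ q, b + 1 < q → x.1 q = 0) (h₂ : ∀ q, b + 1 < q → x.2 q = 0) :
    ∃ y, (∀ q, b + 1 < q → (x - f.coneD n j y).1 q = 0) ∧
      (∀ q, b < q → (x - f.coneD n j y).2 q = 0) := by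
  obtain ⟨z, u⟩ := x
  have hzu : f.totMap n (j + 1 + 1) z = L.totD n (j + 1) u :=
    sub_eq_zero.1 (congrArg Prod.snd hx)
  have hvd : L.vd n (j + 1) (b + 1) (u (b + 1)) = 0 := by
    simpa [totD_apply_succ, h₁ (b + 1 + 1) (by omega), h₂ (b + 1 + 1) (by omega)] using
      (congrArg (· (b + 1 + 1)) hzu).symm
  obtain ⟨c, y, hc, hu⟩ := hf.exists_app_add_vd _ hvd
  refine ⟨(DFinsupp.single (b + 1) c, -(DFinsupp.single b y : L.Tot n j)),
    fun q hq => ?_, fun q hq => ?_⟩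
  · rcases (show q = b + 1 + 1 ∨ b + 1 + 1 < q by omega) with rfl | hq
    · simp [totD_single_apply_succ_self, hc, h₁ _ hq]
    · simp [totD_single_apply_of_lt _ _ _ _ _ _ hq, h₁ q (by omega)]
  · rcases (show q = b + 1 ∨ b + 1 < q by omega) with rfl | hq
    · simp [totD_single_apply_succ_self, hu]
    · simp [totD_single_apply_of_lt _ _ _ _ _ _ hq, h₂ q hq,
        DFinsupp.single_eq_of_ne (show q ≠ b + 1 by omega)]

theorem IsColumnQuasiIso.ker_coneD_le_range (hf : f.IsColumnQuasiIso)
    (hK : ∀ p q, q < 0 → Subsingleton (K.A p q)) (hL : ∀ p q, q < 0 → Subsingleton (L.A p q))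
    (j : ℤ) : LinearMap.ker (f.coneD n (j + 1)) ≤ LinearMap.range (f.coneD n j) := by
  suffices key : ∀ b, -2 ≤ b → ∀ x : K.Tot n (j + 1 + 1) × L.Tot n (j + 1),
      f.coneD n (j + 1) x = 0 → (∀ q, b + 1 < q → x.1 q = 0) → (∀ q, b < q → x.2 q = 0) →
      x ∈ LinearMap.range (f.coneD n j) by
    intro x hx
    obtain ⟨b₁, hb₁⟩ := x.1.exists_forall_lt_apply_eq_zero
    obtain ⟨b₂, hb₂⟩ := x.2.exists_forall_lt_apply_eq_zero
    exact key (max (max b₁ b₂) (-2)) (le_max_right _ _) x hx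
      (fun q hq => hb₁ q (by omega)) (fun q hq => hb₂ q (by omega))
  intro b hb
  induction b, hb using Int.leInduction with
  | base =>
    intro x _ h₁ h₂
    obtain rfl : x = 0 := Prod.ext
      (K.tot_eq_zero_of_apply_nonneg_eq_zero n hK _ fun q hq => h₁ q (by omega))
      (L.tot_eq_zero_of_apply_nonneg_eq_zero n hL _ fun q hq => h₂ q (by omega))
    exact zero_mem _
  | succ b _ ih =>
    intro x hx h₁ h₂
    obtain ⟨y₁, h₁', h₂'⟩ := hf.exists_sub_coneD_fst_vanishes x hx h₁ h₂
    have hx₁ : f.coneD n (j + 1) (x - f.coneD n j y₁) = 0 := by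
      rw [map_sub, hx, coneD_coneD, sub_zero]
    obtain ⟨y₂, h₁'', h₂''⟩ := hf.exists_sub_coneD_snd_vanishes _ hx₁ h₁' h₂'
    have hx₂ : f.coneD n (j + 1) (x - f.coneD n j y₁ - f.coneD n j y₂) = 0 := by
      rw [map_sub, hx₁, coneD_coneD, sub_zero]
    have := add_mem (add_mem (ih _ hx₂ h₁'' h₂'') ⟨y₂, rfl⟩) ⟨y₁, rfl⟩
    rwa [sub_add_cancel, sub_add_cancel] at this

theorem totCohMap_bijective
    (hcone : ∀ j, LinearMap.ker (f.coneD n (j + 1)) ≤ LinearMap.range (f.coneD n j))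
    (k : ℤ) : Function.Bijective (f.totCohMap n k) := by
  obtain ⟨j, rfl⟩ : ∃ j, k = j + 1 + 1 := ⟨k - 2, by ring⟩
  constructor
  · rw [injective_iff_map_eq_zero]
    intro c hc
    obtain ⟨⟨r, hr⟩, rfl⟩ := Submodule.Quotient.mk_surjective _ c
    rw [totCohMap_mk, Submodule.Quotient.mk_eq_zero] at hc
    obtain ⟨w, hw⟩ := (L.mem_boundaries_succ_iff n _ _).1 hc
    have hr' : K.totD n (j + 1 + 1) r = 0 := hr
    have hw' : L.totD n (j + 1) w = f.totMap n (j + 1 + 1) r := hw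
    obtain ⟨⟨s, t⟩, hst⟩ := hcone j (x := (r, w)) (by simp [hr', hw'])
    rw [Submodule.Quotient.mk_eq_zero]
    exact (K.mem_boundaries_succ_iff n _ _).2 ⟨s, congrArg Prod.fst hst⟩
  · intro c
    obtain ⟨⟨y, hy⟩, rfl⟩ := Submodule.Quotient.mk_surjective _ c
    have hy' : L.totD n (j + 1 + 1) y = 0 := hy
    obtain ⟨⟨s, t⟩, hst⟩ := hcone (j + 1) (x := (0, y)) (by simp [hy'])
    simp only [coneD_apply, Prod.mk.injEq] at hst
    refine ⟨Submodule.Quotient.mk ⟨s, hst.1⟩, ?_⟩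
    rw [totCohMap_mk, Submodule.Quotient.eq]
    refine (L.mem_boundaries_succ_iff n _ _).2 ⟨t, ?_⟩
    change L.totD n (j + 1) t = f.totMap n (j + 1 + 1) s - y
    rw [← hst.2, sub_sub_cancel]

end Hom

end PoissonDoubleComplex

/-- **Invariant forms compute the Koszul–Brylinski homology of nilmanifolds**
(Lemma 6.2): let `M = G/H` be a nilmanifold of complex dimension `n` obtained from a
complex nilpotent Lie group `G` with Lie algebra `g` and a discrete subgroup `H`,
endowed with a left-invariant complex structure and a left-invariant holomorphic
Poisson bivector field `π`.  Let `Kinv = (∧^{•,•} g_ℂ^*, ∂_π, ∂̄)` be the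
finite-dimensional double complex of left-invariant forms, `Kgl` the double complex
`(Γ(M, A_M^{•,•}), ∂_π, ∂̄)` of global smooth forms (whose total cohomology is
`H_•(M, π)`), and `ι` the natural inclusion, commuting with both differentials.  If
for every `p` the inclusion of column complexes `(∧^{p,•} g_ℂ^*, ∂̄) ↪ (A_M^{p,•}, ∂̄)`
is a quasi-isomorphism, then the total cohomology of `Kinv` is isomorphic to the
holomorphic Koszul–Brylinski homology `H_•(M, π)`. -/
theorem nilmanifold_invariant_kb
    (Kinv Kgl : PoissonDoubleComplex) (n : ℕ)
    (hbdInv : ∀ p q : ℤ, (p < 0 ∨ (n : ℤ) < p ∨ q < 0 ∨ (n : ℤ) < q) →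
      Subsingleton (Kinv.A p q))
    (hbdGl : ∀ p q : ℤ, (p < 0 ∨ (n : ℤ) < p ∨ q < 0 ∨ (n : ℤ) < q) →
      Subsingleton (Kgl.A p q))
    (ι : ∀ p q, Kinv.A p q →ₗ[ℂ] Kgl.A p q)
    (hιh : ∀ p q (x : Kinv.A p q), Kgl.dh p q (ι p q x) = ι (p - 1) q (Kinv.dh p q x))
    (hιv : ∀ p q (x : Kinv.A p q), Kgl.dv p q (ι p q x) = ι p (q + 1) (Kinv.dv p q x))
    -- `ι` is a quasi-isomorphism on each column complex `(∧^{p,•}, ∂̄) → (A^{p,•}, ∂̄)`: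
    (hqis_inj : ∀ p q (x : Kinv.A p q), Kinv.dv p q x = 0 →
      (∃ y : Kgl.A p (q - 1),
        Kgl.castA rfl (show q - 1 + 1 = q by ring) (Kgl.dv p (q - 1) y) = ι p q x) →
      ∃ z : Kinv.A p (q - 1),
        Kinv.castA rfl (show q - 1 + 1 = q by ring) (Kinv.dv p (q - 1) z) = x)
    (hqis_surj : ∀ p q (u : Kgl.A p q), Kgl.dv p q u = 0 →
      ∃ (x : Kinv.A p q) (y : Kgl.A p (q - 1)),
        Kinv.dv p q x = 0 ∧
        u = ι p q x + Kgl.castA rfl (show q - 1 + 1 = q by ring) (Kgl.dv p (q - 1) y)) :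
    ∀ k : ℤ, Nonempty (Kinv.totCoh n k ≃ₗ[ℂ] Kgl.totCoh n k) := by
  let f : PoissonDoubleComplex.Hom Kinv Kgl := ⟨ι, hιh, hιv⟩
  have hf : f.IsColumnQuasiIso := by
    refine ⟨fun p q x hx ⟨y, hy⟩ => ?_, fun p q u hu => ?_⟩
    · obtain ⟨c, hc⟩ := hqis_inj p (q + 1) x hx ⟨Kgl.castA rfl (by ring) y, by simpa using hy⟩
      exact ⟨Kinv.castA rfl (by ring) c, by simpa using hc⟩
    · obtain ⟨x, y, hx, rfl⟩ := hqis_surj p (q + 1) u hu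
      exact ⟨x, Kgl.castA rfl (by ring) y, hx, by simp [f]⟩
  have hcone := hf.ker_coneD_le_range (n := n) (fun p q hq => hbdInv p q (by omega))
    (fun p q hq => hbdGl p q (by omega))
  exact fun k => ⟨LinearEquiv.ofBijective _ (f.totCohMap_bijective hcone k)⟩
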